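/- arXiv:2512.12738 — 5 statements merged into one kernel-verified Lean document; each statement's English description precedes it below -/
import Mathlib

section
/- There exists ε > 0 such that for every A ∈ (1−ε, 1) and every φ ∈ [0, π/2], the polynomial P_{A,φ}(x,y) = x⁴ + 2A x²y² + y⁴ + 2(x cos φ + y sin φ)² − 2(x sin φ − y cos φ)² + 1/2 is non-discriminant, i.e. there is no point (x,y) ∈ ℝ² at which P_{A,φ} and both of its first partial derivatives vanish simultaneously. -/
/-!
At a critical point `(x, y)` of `P A φ` with critical value `0`, write `u = x cos φ + y sin φ`,
`w = x sin φ - y cos φ` and `F = x⁴ + 2A x²y² + y⁴`. Euler's relation for the homogeneous parts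
gives `F = 1/2` and `w² - u² = 1/2`, and the angular derivative `y ∂ₓP - x ∂ᵧP` gives
`(1 - A) xy (x² - y²) = 2uw`. Since `4u²w² = (u² + w²)² - (w² - u²)² = (x² + y²)² - 1/4`, squaring
yields `(1 - A)² t D = 1/4 + 2(1 - A) t` for `t = x²y²`, `D = (x² - y²)²`, which satisfy
`D + 2(1 + A) t = 1/2`. For `0 ≤ A ≤ 1` the left side is at most `1/8`, a contradiction.
-/

noncomputable section

open Set

/-- The family of polynomials
`x⁴ + 2A x²y² + y⁴ + 2(x cos φ + y sin φ)² − 2(x sin φ − y cos φ)² + 1/2`. -/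
def P (A φ : ℝ) (v : ℝ × ℝ) : ℝ :=
  v.1 ^ 4 + 2 * A * v.1 ^ 2 * v.2 ^ 2 + v.2 ^ 4 +
    2 * (v.1 * Real.cos φ + v.2 * Real.sin φ) ^ 2 -
    2 * (v.1 * Real.sin φ - v.2 * Real.cos φ) ^ 2 + 1 / 2

theorem HasFDerivAt.hasDerivAt_fst_slice {𝕜 E : Type*} [NontriviallyNormedField 𝕜]
    [NormedAddCommGroup E] [NormedSpace 𝕜 E] {f : 𝕜 × 𝕜 → E} {f' : 𝕜 × 𝕜 →L[𝕜] E} {x y : 𝕜}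
    (hf : HasFDerivAt f f' (x, y)) : HasDerivAt (fun t => f (t, y)) (f' (1, 0)) x :=
  hf.comp_hasDerivAt x ((hasDerivAt_id x).prodMk (hasDerivAt_const x y))

theorem HasFDerivAt.hasDerivAt_snd_slice {𝕜 E : Type*} [NontriviallyNormedField 𝕜]
    [NormedAddCommGroup E] [NormedSpace 𝕜 E] {f : 𝕜 × 𝕜 → E} {f' : 𝕜 × 𝕜 →L[𝕜] E} {x y : 𝕜}
    (hf : HasFDerivAt f f' (x, y)) : HasDerivAt (fun t => f (x, t)) (f' (0, 1)) y :=
  hf.comp_hasDerivAt y ((hasDerivAt_const y x).prodMk (hasDerivAt_id y))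

theorem hasDerivAt_P_fst (A φ x y : ℝ) :
    HasDerivAt (fun t => P A φ (t, y))
      (4 * x ^ 3 + 4 * A * x * y ^ 2 + 4 * (x * Real.cos φ + y * Real.sin φ) * Real.cos φ -
        4 * (x * Real.sin φ - y * Real.cos φ) * Real.sin φ) x := by
  have hu : HasDerivAt (fun t => t * Real.cos φ + y * Real.sin φ) (Real.cos φ) x := by
    simpa using ((hasDerivAt_id x).mul_const (Real.cos φ)).add_const (y * Real.sin φ)
  have hw : HasDerivAt (fun t => t * Real.sin φ - y * Real.cos φ) (Real.sin φ) x := by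
    simpa using ((hasDerivAt_id x).mul_const (Real.sin φ)).sub_const (y * Real.cos φ)
  exact ((((((hasDerivAt_pow 4 x).add
    (((hasDerivAt_pow 2 x).const_mul (2 * A)).mul_const (y ^ 2))).add_const (y ^ 4)).add
      ((hu.pow 2).const_mul 2)).sub ((hw.pow 2).const_mul 2)).add_const (1 / 2)).congr_deriv
        (by push_cast; ring)

theorem hasDerivAt_P_snd (A φ x y : ℝ) :
    HasDerivAt (fun t => P A φ (x, t))
      (4 * A * x ^ 2 * y + 4 * y ^ 3 + 4 * (x * Real.cos φ + y * Real.sin φ) * Real.sin φ +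
        4 * (x * Real.sin φ - y * Real.cos φ) * Real.cos φ) y := by
  have hu : HasDerivAt (fun t => x * Real.cos φ + t * Real.sin φ) (Real.sin φ) y := by
    simpa using ((hasDerivAt_id y).mul_const (Real.sin φ)).const_add (x * Real.cos φ)
  have hw : HasDerivAt (fun t => x * Real.sin φ - t * Real.cos φ) (-Real.cos φ) y := by
    simpa using ((hasDerivAt_id y).mul_const (Real.cos φ)).const_sub (x * Real.sin φ)
  exact (((((((hasDerivAt_pow 2 y).const_mul (2 * A * x ^ 2)).const_add (x ^ 4)).add
    (hasDerivAt_pow 4 y)).add ((hu.pow 2).const_mul 2)).sub ((hw.pow 2).const_mul 2)).add_const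
      (1 / 2)).congr_deriv (by push_cast; ring)

theorem critical_point_relations {A c s x y : ℝ} (hcs : c ^ 2 + s ^ 2 = 1)
    (hP : x ^ 4 + 2 * A * x ^ 2 * y ^ 2 + y ^ 4 + 2 * (x * c + y * s) ^ 2 -
      2 * (x * s - y * c) ^ 2 + 1 / 2 = 0)
    (hPx : 4 * x ^ 3 + 4 * A * x * y ^ 2 + 4 * (x * c + y * s) * c -
      4 * (x * s - y * c) * s = 0)
    (hPy : 4 * A * x ^ 2 * y + 4 * y ^ 3 + 4 * (x * c + y * s) * s +
      4 * (x * s - y * c) * c = 0) :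
    (1 - A) ^ 2 * (x * y) ^ 2 * (x ^ 2 - y ^ 2) ^ 2 = 1 / 4 + 2 * (1 - A) * (x * y) ^ 2 ∧
      (x ^ 2 - y ^ 2) ^ 2 + 2 * (1 + A) * (x * y) ^ 2 = 1 / 2 := by
  set u := x * c + y * s
  set w := x * s - y * c
  have hF : x ^ 4 + 2 * A * x ^ 2 * y ^ 2 + y ^ 4 = 1 / 2 := by
    linear_combination (x / 2) * hPx + (y / 2) * hPy - hP
  have hwu : w ^ 2 - u ^ 2 = 1 / 2 := by
    linear_combination (x / 4) * hPx + (y / 4) * hPy - hP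
  have hangular : (1 - A) * x * y * (x ^ 2 - y ^ 2) = 2 * u * w := by
    linear_combination (y / 4) * hPx - (x / 4) * hPy
  have hnorm : u ^ 2 + w ^ 2 = x ^ 2 + y ^ 2 := by
    linear_combination (x ^ 2 + y ^ 2) * hcs
  constructor
  · linear_combination (1 - A) * x * y * (x ^ 2 - y ^ 2) * hangular + 2 * u * w * hangular + hF +
      (u ^ 2 + w ^ 2 + x ^ 2 + y ^ 2) * hnorm + (u ^ 2 - w ^ 2 - 1 / 2) * hwu
  · linear_combination hF

theorem one_sub_sq_mul_mul_lt_of_add_eq {A t D : ℝ} (hA₀ : 0 ≤ A) (hA₁ : A ≤ 1) (ht : 0 ≤ t)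
    (hD : 0 ≤ D) (hsum : D + 2 * (1 + A) * t = 1 / 2) :
    (1 - A) ^ 2 * t * D < 1 / 4 + 2 * (1 - A) * t := by
  have htD : t * D ≤ 1 / 4 * (1 / 2) :=
    mul_le_mul (by nlinarith) (by nlinarith) hD (by norm_num)
  have hB : (1 - A) ^ 2 ≤ 1 := by nlinarith
  calc (1 - A) ^ 2 * t * D = (1 - A) ^ 2 * (t * D) := by ring
    _ ≤ 1 * (1 / 4 * (1 / 2)) := mul_le_mul hB htD (mul_nonneg ht hD) zero_le_one
    _ < 1 / 4 := by norm_num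
    _ ≤ 1 / 4 + 2 * (1 - A) * t := by nlinarith

/-- For `A < 1` sufficiently close to `1` and every `φ ∈ [0, π/2]`, the polynomial
`P A φ` is non-discriminant: it has no real critical point with critical value `0`. -/
theorem P_nondiscriminant_for_A_close_to_one :
    ∃ ε > (0 : ℝ), ∀ A : ℝ, A ∈ Ioo (1 - ε) 1 → ∀ φ : ℝ, φ ∈ Icc 0 (Real.pi / 2) →
      ¬ ∃ v : ℝ × ℝ, P A φ v = 0 ∧ fderiv ℝ (P A φ) v = 0 := by
  refine ⟨1, one_pos, fun A hA φ _ ⟨⟨x, y⟩, hP, hcrit⟩ => ?_⟩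
  have hdiff : DifferentiableAt ℝ (P A φ) (x, y) := by unfold P; fun_prop
  have hzero : HasFDerivAt (P A φ) (0 : ℝ × ℝ →L[ℝ] ℝ) (x, y) := hcrit ▸ hdiff.hasFDerivAt
  have hPx := (hasDerivAt_P_fst A φ x y).unique hzero.hasDerivAt_fst_slice
  have hPy := (hasDerivAt_P_snd A φ x y).unique hzero.hasDerivAt_snd_slice
  obtain ⟨hkey, hsum⟩ := critical_point_relations (Real.cos_sq_add_sin_sq φ) hP hPx hPy
  exact (one_sub_sq_mul_mul_lt_of_add_eq (by linarith [hA.1]) hA.2.le (sq_nonneg _) (sq_nonneg _)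
    hsum).ne hkey
end
end

section
/- Let l(x,y,z) = αx + βy + γz be a linear function on ℝ³ of unit norm (α² + β² + γ² = 1) vanishing on the vector (1,1,1) (i.e. α + β + γ = 0). Then the polynomial F(x,y,z) = x³ + y³ + z³ − l(x,y,z)² has exactly one real critical point, namely the origin: the gradient of F vanishes at a point (x,y,z) ∈ ℝ³ if and only if (x,y,z) = (0,0,0). -/
def cubicMinusLinearSq (α β γ : ℝ) (v : ℝ × ℝ × ℝ) : ℝ :=
  v.1 ^ 3 + v.2.1 ^ 3 + v.2.2 ^ 3 - (α * v.1 + β * v.2.1 + γ * v.2.2) ^ 2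

lemma fderiv_cubicMinusLinearSq_apply (α β γ : ℝ) (a v : ℝ × ℝ × ℝ) :
    fderiv ℝ (cubicMinusLinearSq α β γ) a v =
      3 * (a.1 ^ 2 * v.1 + a.2.1 ^ 2 * v.2.1 + a.2.2 ^ 2 * v.2.2) -
        2 * (α * a.1 + β * a.2.1 + γ * a.2.2) * (α * v.1 + β * v.2.1 + γ * v.2.2) := by
  have hx : HasFDerivAt (fun v : ℝ × ℝ × ℝ => v.1) _ a := hasFDerivAt_fst (𝕜 := ℝ)
  have hy : HasFDerivAt (fun v : ℝ × ℝ × ℝ => v.2.1) _ a := (hasFDerivAt_snd (𝕜 := ℝ)).fst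
  have hz : HasFDerivAt (fun v : ℝ × ℝ × ℝ => v.2.2) _ a := (hasFDerivAt_snd (𝕜 := ℝ)).snd
  have hl := ((hx.const_mul α).add (hy.const_mul β)).add (hz.const_mul γ)
  have hF : HasFDerivAt (cubicMinusLinearSq α β γ) _ a :=
    (((hx.pow 3).add (hy.pow 3)).add (hz.pow 3)).sub (hl.pow 2)
  rw [hF.fderiv]
  simp only [Nat.add_one_sub_one, nsmul_eq_mul, Nat.cast_ofNat, Pi.add_apply, pow_one, smul_add,
    sub_apply, add_apply, smul_apply, ContinuousLinearMap.coe_fst', smul_eq_mul,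
    ContinuousLinearMap.comp_apply, ContinuousLinearMap.coe_snd']
  ring

lemma eq_zero_of_sq_add_sq_add_sq_eq_zero {x y z : ℝ} (h : x ^ 2 + y ^ 2 + z ^ 2 = 0) :
    x = 0 ∧ y = 0 ∧ z = 0 := by
  simpa [add_eq_zero_iff_of_nonneg, add_nonneg, sq_nonneg, and_assoc] using h

theorem cubic_minus_linear_sq_unique_critical_point_general
    (α β γ : ℝ) (hsum : α + β + γ = 0) :
    ∀ a : ℝ × ℝ × ℝ,
      fderiv ℝ (fun v : ℝ × ℝ × ℝ =>
        v.1 ^ 3 + v.2.1 ^ 3 + v.2.2 ^ 3 -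
          (α * v.1 + β * v.2.1 + γ * v.2.2) ^ 2) a = 0 ↔ a = 0 := by
  intro a
  change fderiv ℝ (cubicMinusLinearSq α β γ) a = 0 ↔ a = 0
  constructor
  · intro hcrit
    -- Along `(1, 1, 1)` the `l²` term drops out since `l (1, 1, 1) = α + β + γ = 0`.
    have hdiag := fderiv_cubicMinusLinearSq_apply α β γ a (1, 1, 1)
    have hsq : a.1 ^ 2 + a.2.1 ^ 2 + a.2.2 ^ 2 = 0 := by
      simp only [hcrit, zero_apply, mul_one] at hdiag
      linear_combination (-hdiag + 2 * (α * a.1 + β * a.2.1 + γ * a.2.2) * hsum) / 3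
    obtain ⟨hx, hy, hz⟩ := eq_zero_of_sq_add_sq_add_sq_eq_zero hsq
    exact Prod.ext hx (Prod.ext hy hz)
  · rintro rfl
    exact ContinuousLinearMap.ext fun v => by simp [fderiv_cubicMinusLinearSq_apply]

/-- Let `l = αx + βy + γz` be a linear function of unit norm vanishing on the vector
`(1,1,1)`. Then the only real critical point of `F = x³ + y³ + z³ - l²` is the origin. -/
theorem cubic_minus_linear_sq_unique_critical_point
    (α β γ : ℝ) (hnorm : α ^ 2 + β ^ 2 + γ ^ 2 = 1) (hsum : α + β + γ = 0) :
    ∀ a : ℝ × ℝ × ℝ,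
      fderiv ℝ (fun v : ℝ × ℝ × ℝ =>
        v.1 ^ 3 + v.2.1 ^ 3 + v.2.2 ^ 3 -
          (α * v.1 + β * v.2.1 + γ * v.2.2) ^ 2) a = 0 ↔ a = 0 :=
  cubic_minus_linear_sq_unique_critical_point_general α β γ hsum
end

section
/- Let l(x,y,z) = αx + βy + γz be a linear function on ℝ³ of unit norm (α² + β² + γ² = 1) vanishing on the vector (1,1,1) (i.e. α + β + γ = 0), and set F(x,y,z) = x³ + y³ + z³ − 6xyz + 3·l(x,y,z)². Then the origin is a critical point of F with critical value 0, and every real critical point a ∈ ℝ³ of F with a ≠ (0,0,0) satisfies F(a) > 0. -/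
/-!
At a critical point `a`, Euler's identity for the homogeneous parts (`⟨∇F(a), a⟩ = 3·cubic + 6l²`)
gives `F(a) = l(a)²`. If moreover `l(a) = 0`, then `a` is a critical point of the cubic
`x³ + y³ + z³ - 6xyz` alone, i.e. `x² = 2yz`, `y² = 2xz`, `z² = 2xy`; multiplying these gives
`(xyz)² = 8(xyz)²`, so some coordinate vanishes and then all do.
-/

noncomputable section

/-- `F = x³ + y³ + z³ - 6xyz + 3l²`, where `l = αx + βy + γz`. -/
def F (α β γ : ℝ) (v : ℝ × ℝ × ℝ) : ℝ :=
  v.1 ^ 3 + v.2.1 ^ 3 + v.2.2 ^ 3 - 6 * v.1 * v.2.1 * v.2.2 +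
    3 * (α * v.1 + β * v.2.1 + γ * v.2.2) ^ 2

open ContinuousLinearMap

def covector (p q r : ℝ) : ℝ × ℝ × ℝ →L[ℝ] ℝ :=
  p • fst ℝ ℝ (ℝ × ℝ) + q • (fst ℝ ℝ ℝ).comp (snd ℝ ℝ (ℝ × ℝ)) +
    r • (snd ℝ ℝ ℝ).comp (snd ℝ ℝ (ℝ × ℝ))

@[simp]
lemma covector_apply (p q r : ℝ) (v : ℝ × ℝ × ℝ) :
    covector p q r v = p * v.1 + q * v.2.1 + r * v.2.2 := by
  simp [covector]

lemma covector_eq_zero_iff {p q r : ℝ} : covector p q r = 0 ↔ p = 0 ∧ q = 0 ∧ r = 0 := by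
  refine ⟨fun h => ⟨?_, ?_, ?_⟩, fun ⟨hp, hq, hr⟩ => by ext <;> simp [hp, hq, hr]⟩
  · simpa using congr($h (1, 0, 0))
  · simpa using congr($h (0, 1, 0))
  · simpa using congr($h (0, 0, 1))

lemma hasFDerivAt_F (α β γ x y z : ℝ) :
    HasFDerivAt (F α β γ)
      (covector (3 * x ^ 2 - 6 * y * z + 6 * (α * x + β * y + γ * z) * α)
        (3 * y ^ 2 - 6 * x * z + 6 * (α * x + β * y + γ * z) * β)
        (3 * z ^ 2 - 6 * x * y + 6 * (α * x + β * y + γ * z) * γ)) (x, y, z) := by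
  have hx : HasFDerivAt (fun v : ℝ × ℝ × ℝ => v.1) (covector 1 0 0) (x, y, z) :=
    hasFDerivAt_fst.congr_fderiv (by ext <;> simp)
  have hy : HasFDerivAt (fun v : ℝ × ℝ × ℝ => v.2.1) (covector 0 1 0) (x, y, z) :=
    (hasFDerivAt_fst.comp (x, y, z) hasFDerivAt_snd).congr_fderiv (by ext <;> simp)
  have hz : HasFDerivAt (fun v : ℝ × ℝ × ℝ => v.2.2) (covector 0 0 1) (x, y, z) :=
    (hasFDerivAt_snd.comp (x, y, z) hasFDerivAt_snd).congr_fderiv (by ext <;> simp)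
  have hl := ((hx.const_mul α).add (hy.const_mul β)).add (hz.const_mul γ)
  have h := (((((hx.pow 3).add (hy.pow 3)).add (hz.pow 3)).sub
    (((hx.const_mul 6).mul hy).mul hz)).add ((hl.pow 2).const_mul 3))
  refine (h.congr_fderiv ?_).congr_of_eventuallyEq (.of_forall fun v => ?_)
  · ext <;> simp <;> ring
  · simp [F]

lemma fderiv_F_eq_zero_iff {α β γ x y z : ℝ} :
    fderiv ℝ (F α β γ) (x, y, z) = 0 ↔
      x ^ 2 - 2 * y * z + 2 * (α * x + β * y + γ * z) * α = 0 ∧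
      y ^ 2 - 2 * x * z + 2 * (α * x + β * y + γ * z) * β = 0 ∧
      z ^ 2 - 2 * x * y + 2 * (α * x + β * y + γ * z) * γ = 0 := by
  rw [(hasFDerivAt_F α β γ x y z).fderiv, covector_eq_zero_iff]
  constructor <;> rintro ⟨h₁, h₂, h₃⟩ <;> refine ⟨?_, ?_, ?_⟩ <;> linarith

lemma F_eq_sq_of_critical {α β γ x y z : ℝ}
    (h₁ : x ^ 2 - 2 * y * z + 2 * (α * x + β * y + γ * z) * α = 0)
    (h₂ : y ^ 2 - 2 * x * z + 2 * (α * x + β * y + γ * z) * β = 0)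
    (h₃ : z ^ 2 - 2 * x * y + 2 * (α * x + β * y + γ * z) * γ = 0) :
    F α β γ (x, y, z) = (α * x + β * y + γ * z) ^ 2 := by
  simp only [F]
  linear_combination x * h₁ + y * h₂ + z * h₃

lemma eq_zero_of_sq_eq_two_mul_mul {x y z : ℝ} (h₁ : x ^ 2 = 2 * y * z)
    (h₂ : y ^ 2 = 2 * x * z) (h₃ : z ^ 2 = 2 * x * y) : x = 0 ∧ y = 0 ∧ z = 0 := by
  have hxyz : x * y * z = 0 := by
    -- `(xyz)² = x²y²z² = (2yz)(2xz)(2xy) = 8(xyz)²`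
    refine pow_eq_zero_iff two_ne_zero |>.mp ?_
    linear_combination (-1 / 7 : ℝ) *
      (y ^ 2 * z ^ 2 * h₁ + 2 * y * z * z ^ 2 * h₂ + 4 * y * z * x * z * h₃)
  rcases mul_eq_zero.mp hxyz with hxy | rfl
  · rcases mul_eq_zero.mp hxy with rfl | rfl
    · simp_all
    · simp_all
  · simp_all

theorem critical_values_positive_away_from_origin_general
    (α β γ : ℝ) :
    fderiv ℝ (F α β γ) 0 = 0 ∧ F α β γ 0 = 0 ∧
      ∀ a : ℝ × ℝ × ℝ, a ≠ 0 → fderiv ℝ (F α β γ) a = 0 → 0 < F α β γ a := by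
  refine ⟨fderiv_F_eq_zero_iff.mpr (by simp), by simp [F], ?_⟩
  rintro ⟨x, y, z⟩ ha hcrit
  obtain ⟨h₁, h₂, h₃⟩ := fderiv_F_eq_zero_iff.mp hcrit
  rw [F_eq_sq_of_critical h₁ h₂ h₃]
  refine sq_pos_of_ne_zero fun hl => ha ?_
  rw [hl] at h₁ h₂ h₃
  obtain ⟨rfl, rfl, rfl⟩ := eq_zero_of_sq_eq_two_mul_mul (x := x) (y := y) (z := z)
    (by linarith) (by linarith) (by linarith)
  rfl

/-- Let `l = αx + βy + γz` be a linear function of unit norm vanishing on the vector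
`(1,1,1)`, and `F = x³ + y³ + z³ - 6xyz + 3l²`. Then the origin is a critical point of `F`
with critical value `0`, and every other real critical point of `F` has positive
critical value. -/
theorem critical_values_positive_away_from_origin
    (α β γ : ℝ) (hnorm : α ^ 2 + β ^ 2 + γ ^ 2 = 1) (hsum : α + β + γ = 0) :
    fderiv ℝ (F α β γ) 0 = 0 ∧ F α β γ 0 = 0 ∧
      ∀ a : ℝ × ℝ × ℝ, a ≠ 0 → fderiv ℝ (F α β γ) a = 0 → 0 < F α β γ a :=
  critical_values_positive_away_from_origin_general α β γ
end
end

section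
/- The equation (A² + 3)³ = 135 (A² − 1)², equivalently (A² + 3)³ / (27 (A² − 1)²) = 5, has exactly two real solutions A in the interval (−∞, −1). -/
/-!
Put `t = A²`, which maps `(-∞, -1)` bijectively onto `(1, ∞)`. The equation becomes the cubic
`(t + 3)³ - 135 (t - 1)² = 0`, whose values at `0, 1, 100, 126` have signs `-, +, -, +`.
So it has a root in `(0, 1)` and one in each of `(1, 100)` and `(100, 126)`; having at most
three roots, it has exactly two in `(1, ∞)`.
-/

open Polynomial Set

theorem ncard_setOf_lt_neg_one_sq (P : ℝ → Prop) :
    {A : ℝ | A < -1 ∧ P (A ^ 2)}.ncard = {t : ℝ | 1 < t ∧ P t}.ncard := by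
  have h_inj : InjOn (· ^ 2) {A : ℝ | A < -1 ∧ P (A ^ 2)} := by
    rintro A ⟨hA, -⟩ B ⟨hB, -⟩ hAB
    exact (sq_eq_sq_iff_eq_or_eq_neg.1 hAB).resolve_right (by intro; linarith)
  have h_image : (· ^ 2) '' {A : ℝ | A < -1 ∧ P (A ^ 2)} = {t : ℝ | 1 < t ∧ P t} := by
    ext t
    constructor
    · rintro ⟨A, ⟨hA, hP⟩, rfl⟩
      exact ⟨by nlinarith, hP⟩
    · rintro ⟨ht, hP⟩
      have ht₀ : 0 ≤ t := by linarith
      refine ⟨-√t, ⟨?_, by rwa [neg_sq, Real.sq_sqrt ht₀]⟩, by simp [Real.sq_sqrt ht₀]⟩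
      have : 1 < √t := Real.lt_sqrt zero_le_one |>.2 (by simpa using ht)
      linarith
  rw [← h_image, h_inj.ncard_image]

theorem Polynomial.ncard_setOf_mem_isRoot_lt_natDegree {R : Type*} [CommRing R] [IsDomain R]
    {p : R[X]} (hp : p ≠ 0) {s : Set R} {r : R} (hr : p.IsRoot r) (hrs : r ∉ s) :
    {x | x ∈ s ∧ p.IsRoot x}.ncard < p.natDegree := by
  have h_sub : insert r {x | x ∈ s ∧ p.IsRoot x} ⊆ p.rootSet R := by
    rintro x (rfl | ⟨-, hx⟩)
    exacts [by simpa [mem_rootSet, hp] using hr, by simpa [mem_rootSet, hp] using hx]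
  have h_fin : {x | x ∈ s ∧ p.IsRoot x}.Finite :=
    (finite_setOfPred_isRoot hp).subset fun x hx => hx.2
  calc {x | x ∈ s ∧ p.IsRoot x}.ncard
      < (insert r {x | x ∈ s ∧ p.IsRoot x}).ncard := by
        rw [ncard_insert_of_notMem (fun h => hrs h.1) h_fin]; exact Nat.lt_succ_self _
    _ ≤ (p.rootSet R).ncard := ncard_le_ncard h_sub (p.rootSet_finite R)
    _ ≤ p.natDegree := p.ncard_rootSet_le R

theorem Polynomial.exists_isRoot_mem_Ioo_of_eval_mul_neg {p : ℝ[X]} {a b : ℝ} (hab : a ≤ b)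
    (h : p.eval a * p.eval b < 0) : ∃ r ∈ Ioo a b, p.IsRoot r := by
  rcases mul_neg_iff.1 h with ⟨ha, hb⟩ | ⟨ha, hb⟩
  exacts [intermediate_value_Ioo' hab p.continuousOn ⟨hb, ha⟩,
    intermediate_value_Ioo hab p.continuousOn ⟨ha, hb⟩]

noncomputable def jCubic : ℝ[X] := (X + C 3) ^ 3 - C 135 * (X - C 1) ^ 2

theorem jCubic_eval (t : ℝ) : jCubic.eval t = (t + 3) ^ 3 - 135 * (t - 1) ^ 2 := by
  simp [jCubic]

theorem jCubic_natDegree : jCubic.natDegree = 3 := by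
  unfold jCubic; compute_degree!

theorem jCubic_ne_zero : jCubic ≠ 0 :=
  ne_zero_of_natDegree_gt (n := 0) (by rw [jCubic_natDegree]; norm_num)

theorem ncard_setOf_one_lt_isRoot_jCubic : {t : ℝ | 1 < t ∧ jCubic.IsRoot t}.ncard = 2 := by
  obtain ⟨r₀, ⟨-, hr₀⟩, hr₀_root⟩ := exists_isRoot_mem_Ioo_of_eval_mul_neg (p := jCubic)
    (a := 0) (b := 1) (by norm_num) (by norm_num [jCubic_eval])
  obtain ⟨r₁, ⟨hr₁, hr₁_lt⟩, hr₁_root⟩ := exists_isRoot_mem_Ioo_of_eval_mul_neg (p := jCubic)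
    (a := 1) (b := 100) (by norm_num) (by norm_num [jCubic_eval])
  obtain ⟨r₂, ⟨hr₂, -⟩, hr₂_root⟩ := exists_isRoot_mem_Ioo_of_eval_mul_neg (p := jCubic)
    (a := 100) (b := 126) (by norm_num) (by norm_num [jCubic_eval])
  have h_le : {t : ℝ | 1 < t ∧ jCubic.IsRoot t}.ncard ≤ 2 := by
    have := ncard_setOf_mem_isRoot_lt_natDegree jCubic_ne_zero (s := Ioi 1) hr₀_root
      (not_lt.2 hr₀.le)
    rw [jCubic_natDegree] at this
    exact Nat.le_of_lt_succ this
  have h_pair : ({r₁, r₂} : Set ℝ) ⊆ {t : ℝ | 1 < t ∧ jCubic.IsRoot t} := by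
    rintro x (rfl | rfl)
    exacts [⟨hr₁, hr₁_root⟩, ⟨by linarith, hr₂_root⟩]
  have h_fin : {t : ℝ | 1 < t ∧ jCubic.IsRoot t}.Finite :=
    (finite_setOfPred_isRoot jCubic_ne_zero).subset fun t ht => ht.2
  have h_ge := ncard_le_ncard h_pair h_fin
  rw [ncard_pair (by linarith)] at h_ge
  omega

/-- The equation `(A² + 3)³ = 135 (A² − 1)²` (i.e. `(A² + 3)³ / (27 (A² − 1)²) = 5`,
saying that the `j`-invariant of the quartic form `x⁴ + 2A x²y² + y⁴` equals `5`)
has exactly two real solutions `A < -1`. -/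
theorem j_invariant_equation_has_two_roots_below_neg_one :
    {A : ℝ | A < -1 ∧ (A ^ 2 + 3) ^ 3 = 135 * (A ^ 2 - 1) ^ 2}.ncard = 2 := by
  have h_cubic : {A : ℝ | A < -1 ∧ (A ^ 2 + 3) ^ 3 = 135 * (A ^ 2 - 1) ^ 2} =
      {A : ℝ | A < -1 ∧ jCubic.IsRoot (A ^ 2)} := by
    simp only [IsRoot.def, jCubic_eval, sub_eq_zero]
  rw [h_cubic, ncard_setOf_lt_neg_one_sq, ncard_setOf_one_lt_isRoot_jCubic]
end

section
/- For every α ∈ (1/4, 1/2), the real plane curve {(x,y) ∈ ℝ² : x⁴ + y⁴ − x² − y² + α = 0} has exactly four connected components; and for every α ∈ (0, 1/4), the curve {(x,y) ∈ ℝ² : x⁴ + y⁴ − x² − y² + α = 0} has exactly two connected components. -/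
/-!
Since `x⁴ + y⁴ - x² - y² + α = (x² - 1/2)² + (y² - 1/2)² - (1/2 - α)`, for `α > 1/4` the curve
misses both axes, and in each open quadrant it is the image of the circle of radius `√(1/2 - α)`
under `(u, v) ↦ (±√(1/2 + u), ±√(1/2 + v))`: four ovals.

For `0 < α < 1/4` the curve misses the circle `x² + y² = 1/2`, on which the polynomial equals
`α - 1/4 - 2x²y² < 0`. At `c • p` it takes the value `Q c⁴ - N c² + α`, where `N = x² + y²` and
`Q = x⁴ + y⁴` are evaluated at `p ≠ 0`; the two roots `c² = (N ± √(N² - 4αQ)) / (2Q)` put `c • p`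
on opposite sides of that circle, so each side meets the curve in a continuous image of the
punctured plane.
-/

noncomputable section

open Set Function

theorem isClosed_of_pairwise_disjoint_isOpen_cover {X ι : Type*} [TopologicalSpace X]
    {U : ι → Set X} (hopen : ∀ i, IsOpen (U i)) (hdisj : Pairwise (Disjoint on U))
    (hunion : ⋃ i, U i = univ) (i : ι) : IsClosed (U i) := by
  have hcompl : (U i)ᶜ = ⋃ (j) (_ : j ≠ i), U j := by
    ext x
    obtain ⟨k, hk⟩ := mem_iUnion.mp (hunion.symm ▸ mem_univ x)
    simp only [mem_compl_iff, mem_iUnion, exists_prop]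
    refine ⟨fun hx => ⟨k, fun h => hx (h ▸ hk), hk⟩, ?_⟩
    rintro ⟨j, hji, hj⟩
    exact Set.disjoint_left.mp (hdisj hji) hj
  rw [← isOpen_compl_iff, hcompl]
  exact isOpen_biUnion fun j _ => hopen j

theorem Nat.card_connectedComponents_eq_of_isOpen_cover {X ι : Type*} [TopologicalSpace X]
    {S : Set X} (V : ι → Set X) (hopen : ∀ i, IsOpen (V i)) (hdisj : Pairwise (Disjoint on V))
    (hcover : S ⊆ ⋃ i, V i) (hconn : ∀ i, IsConnected (S ∩ V i)) :
    Nat.card (ConnectedComponents S) = Nat.card ι := by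
  set U : ι → Set S := fun i => Subtype.val ⁻¹' V i
  have hunion : ⋃ i, U i = univ := by
    rw [← preimage_iUnion, ← univ_subset_iff]
    exact fun x _ => hcover x.2
  have hconnU : ∀ i, IsConnected (U i) := fun i => by
    have h := hconn i
    rw [← Subtype.image_preimage_coe] at h
    exact ⟨h.nonempty.of_image, Topology.IsInducing.subtypeVal.isPreconnected_image.mp h.2⟩
  have hopenU : ∀ i, IsOpen (U i) := fun i => (hopen i).preimage continuous_subtype_val
  have hdisjU : Pairwise (Disjoint on U) := fun i j hij => (hdisj hij).preimage _
  exact Nat.card_congr (ConnectedComponents.equivOfIsClopenOfIsConnected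
    (fun i => ⟨isClosed_of_pairwise_disjoint_isOpen_cover hopenU hdisjU hunion i, hopenU i⟩)
    hdisjU hunion hconnU)

namespace Int

variable {R : Type*} [CommRing R]

theorem units_smul_sq (s : ℤˣ) (x : R) : (s • x) ^ 2 = x ^ 2 := by
  rcases units_eq_one_or s with rfl | rfl <;> simp

theorem units_smul_units_smul (s : ℤˣ) (x : R) : s • s • x = x := by
  rw [smul_smul, units_mul_self, one_smul]

variable [LinearOrder R] [IsStrictOrderedRing R]

theorem exists_units_smul_pos {x : R} (hx : x ≠ 0) : ∃ s : ℤˣ, 0 < s • x := by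
  rcases hx.lt_or_gt with h | h
  · exact ⟨-1, by simpa using h⟩
  · exact ⟨1, by simpa using h⟩

theorem units_eq_of_smul_pos {s t : ℤˣ} {x : R} (hs : 0 < s • x) (ht : 0 < t • x) :
    s = t := by
  rcases units_eq_one_or s with rfl | rfl <;> rcases units_eq_one_or t with rfl | rfl <;>
    simp only [one_smul, Units.neg_smul] at hs ht <;> first | rfl | (exfalso; linarith)

theorem units_smul_abs_of_smul_pos {s : ℤˣ} {x : R} (h : 0 < s • x) : s • |x| = x := by
  rcases units_eq_one_or s with rfl | rfl <;> simp only [one_smul, Units.neg_smul] at h ⊢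
  · exact abs_of_pos h
  · rw [abs_of_neg (by linarith)]; simp

end Int

section QuadRoot

def quadRoot (α N Q : ℝ) (σ : ℤˣ) : ℝ := (N + σ • √(N ^ 2 - 4 * α * Q)) / (2 * Q)

variable {α N Q : ℝ}

theorem quadRoot_isRoot (hQ : Q ≠ 0) (hD : 0 ≤ N ^ 2 - 4 * α * Q) (σ : ℤˣ) :
    Q * quadRoot α N Q σ ^ 2 - N * quadRoot α N Q σ + α = 0 := by
  have hw := Real.sq_sqrt hD
  unfold quadRoot
  generalize √(N ^ 2 - 4 * α * Q) = w at hw ⊢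
  rcases Int.units_eq_one_or σ with rfl | rfl <;>
    simp only [one_smul, Units.neg_smul] <;> field_simp <;> linear_combination hw

theorem quadRoot_nonneg (hα : 0 < α) (hQ : 0 < Q) (hN : 0 ≤ N) (σ : ℤˣ) :
    0 ≤ quadRoot α N Q σ := by
  have hw : √(N ^ 2 - 4 * α * Q) ≤ N := by
    rw [Real.sqrt_le_left hN]
    nlinarith
  rcases Int.units_eq_one_or σ with rfl | rfl <;> simp only [quadRoot, one_smul, Units.neg_smul] <;>
    exact div_nonneg (by linarith [Real.sqrt_nonneg (N ^ 2 - 4 * α * Q)]) (by linarith)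

theorem units_smul_quadRoot_mul_sub_half_pos (hα₀ : 0 < α) (hα : α < 1/4) (hQ : 0 < Q)
    (hQN : Q ≤ N ^ 2) (hN : 0 ≤ N) (σ : ℤˣ) : 0 < σ • (quadRoot α N Q σ * N - 1/2) := by
  have hD : 0 < N ^ 2 - 4 * α * Q := by nlinarith
  have hw := Real.sq_sqrt hD.le
  have hw₀ := Real.sqrt_pos.mpr hD
  have hN₀ : 0 < N := by nlinarith
  rcases Int.units_eq_one_or σ with rfl | rfl <;> simp only [quadRoot, one_smul, Units.neg_smul]
  · rw [sub_pos, div_mul_eq_mul_div, lt_div_iff₀ (by linarith)]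
    nlinarith
  · rw [neg_pos, sub_neg, div_mul_eq_mul_div, div_lt_iff₀ (by linarith)]
    by_contra! h
    have hsq := mul_self_le_mul_self (by positivity)
      (show N * √(N ^ 2 - 4 * α * Q) ≤ N ^ 2 - Q by linarith)
    nlinarith [mul_le_mul_of_nonneg_left hQN hQ.le, mul_pos (mul_pos hN₀ hN₀) hQ]

theorem quadRoot_eq_one (hα : α < 1/4) (hQ : 0 < Q) (hQN : Q ≤ N ^ 2) (hN : 0 ≤ N)
    (hroot : Q - N + α = 0) {σ : ℤˣ} (hσ : 0 < σ • (N - 1/2)) : quadRoot α N Q σ = 1 := by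
  have hD : N ^ 2 - 4 * α * Q = (N - 2 * Q) ^ 2 := by linear_combination -4 * Q * hroot
  rw [quadRoot, hD, Real.sqrt_sq_eq_abs, div_eq_one_iff_eq (by linarith)]
  rcases Int.units_eq_one_or σ with rfl | rfl <;> simp only [one_smul, Units.neg_smul] at hσ ⊢
  · rw [abs_of_nonpos (by linarith)]
    linarith
  · rw [abs_of_nonneg (by nlinarith [mul_nonneg hN (by linarith : (0 : ℝ) ≤ 1 - 2 * N)])]
    linarith

end QuadRoot

def quarticCurve (α : ℝ) : Set (ℝ × ℝ) :=
  {v : ℝ × ℝ | v.1 ^ 4 + v.2 ^ 4 - v.1 ^ 2 - v.2 ^ 2 + α = 0}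

section FourOvals

variable {α : ℝ}

theorem mem_quarticCurve_iff_circle {p : ℝ × ℝ} :
    p ∈ quarticCurve α ↔ (p.1 ^ 2 - 1/2) ^ 2 + (p.2 ^ 2 - 1/2) ^ 2 = 1/2 - α := by
  constructor <;> intro h <;> simp only [quarticCurve, mem_ofPred_eq] at * <;>
    linear_combination h

def quadrant (st : ℤˣ × ℤˣ) : Set (ℝ × ℝ) := {p | 0 < st.1 • p.1 ∧ 0 < st.2 • p.2}

theorem isOpen_quadrant (st : ℤˣ × ℤˣ) : IsOpen (quadrant st) :=
  (isOpen_lt continuous_const (continuous_fst.const_smul _)).inter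
    (isOpen_lt continuous_const (continuous_snd.const_smul _))

theorem pairwise_disjoint_quadrant : Pairwise (Disjoint on quadrant) :=
  fun _ _ hne => Set.disjoint_left.mpr fun _ hp hp' =>
    hne (Prod.ext (Int.units_eq_of_smul_pos hp.1 hp'.1) (Int.units_eq_of_smul_pos hp.2 hp'.2))

theorem quarticCurve_subset_iUnion_quadrant (hα : 1/4 < α) :
    quarticCurve α ⊆ ⋃ st, quadrant st := by
  intro p hp
  simp only [quarticCurve, mem_ofPred_eq] at hp
  have hx : p.1 ≠ 0 := fun h => by rw [h] at hp; nlinarith [sq_nonneg (p.2 ^ 2 - 1/2)]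
  have hy : p.2 ≠ 0 := fun h => by rw [h] at hp; nlinarith [sq_nonneg (p.1 ^ 2 - 1/2)]
  obtain ⟨s, hs⟩ := Int.exists_units_smul_pos hx
  obtain ⟨t, ht⟩ := Int.exists_units_smul_pos hy
  exact mem_iUnion.mpr ⟨(s, t), hs, ht⟩

def quadrantArc (st : ℤˣ × ℤˣ) (z : ℂ) : ℝ × ℝ :=
  (st.1 • √(1/2 + z.re), st.2 • √(1/2 + z.im))

theorem continuous_quadrantArc (st : ℤˣ × ℤˣ) : Continuous (quadrantArc st) :=
  ((Complex.continuous_re.const_add _).sqrt.const_smul _).prodMk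
    ((Complex.continuous_im.const_add _).sqrt.const_smul _)

theorem quarticCurve_inter_quadrant (h₁ : 1/4 < α) (h₂ : α ≤ 1/2) (st : ℤˣ × ℤˣ) :
    quarticCurve α ∩ quadrant st = quadrantArc st '' Metric.sphere 0 √(1/2 - α) := by
  ext p
  constructor
  · rintro ⟨hp, hs, ht⟩
    refine ⟨⟨p.1 ^ 2 - 1/2, p.2 ^ 2 - 1/2⟩, ?_, ?_⟩
    · rw [mem_sphere_zero_iff_norm, Complex.norm_def, Complex.normSq_mk,
        ← mem_quarticCurve_iff_circle.mp hp]
      ring_nf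
    · simp only [quadrantArc, add_sub_cancel, Real.sqrt_sq_eq_abs,
        Int.units_smul_abs_of_smul_pos hs, Int.units_smul_abs_of_smul_pos ht]
  · rintro ⟨z, hz, rfl⟩
    rw [mem_sphere_zero_iff_norm, Complex.norm_def,
      Real.sqrt_inj (Complex.normSq_nonneg z) (by linarith), Complex.normSq_apply] at hz
    have hre : 0 < 1/2 + z.re := by nlinarith [sq_nonneg z.im]
    have him : 0 < 1/2 + z.im := by nlinarith [sq_nonneg z.re]
    refine ⟨mem_quarticCurve_iff_circle.mpr ?_, ?_, ?_⟩
    · simp only [quadrantArc, Int.units_smul_sq, Real.sq_sqrt hre.le, Real.sq_sqrt him.le]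
      linear_combination hz
    · simpa [quadrantArc, Int.units_smul_units_smul] using hre
    · simpa [quadrantArc, Int.units_smul_units_smul] using him

theorem card_connectedComponents_quarticCurve_of_quarter_lt (h₁ : 1/4 < α) (h₂ : α ≤ 1/2) :
    Nat.card (ConnectedComponents (quarticCurve α)) = 4 := by
  have hsphere : IsConnected (Metric.sphere (0 : ℂ) √(1/2 - α)) :=
    isConnected_sphere (by simp [Complex.rank_real_complex]) 0 (Real.sqrt_nonneg _)
  refine (Nat.card_connectedComponents_eq_of_isOpen_cover quadrant isOpen_quadrant
    pairwise_disjoint_quadrant (quarticCurve_subset_iUnion_quadrant h₁) fun st => ?_).trans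
    (by simp)
  rw [quarticCurve_inter_quadrant h₁ h₂]
  exact hsphere.image _ (continuous_quadrantArc st).continuousOn

end FourOvals

section TwoOvals

variable {α : ℝ}

theorem pow_four_add_pow_four_le (x y : ℝ) : x ^ 4 + y ^ 4 ≤ (x ^ 2 + y ^ 2) ^ 2 := by
  nlinarith [sq_nonneg (x * y)]

theorem pow_four_add_pow_four_pos {p : ℝ × ℝ} (hp : p ≠ 0) : 0 < p.1 ^ 4 + p.2 ^ 4 := by
  obtain ⟨x, y⟩ := p
  rcases not_and_or.mp (Prod.mk_eq_zero.not.mp hp) with h | h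
  · exact add_pos_of_pos_of_nonneg (Even.pow_pos (by decide) h) (by positivity)
  · exact add_pos_of_nonneg_of_pos (by positivity) (Even.pow_pos (by decide) h)

theorem smul_mem_quarticCurve_iff (c : ℝ) (p : ℝ × ℝ) :
    c • p ∈ quarticCurve α ↔
      (p.1 ^ 4 + p.2 ^ 4) * (c ^ 2) ^ 2 - (p.1 ^ 2 + p.2 ^ 2) * c ^ 2 + α = 0 := by
  simp only [quarticCurve, mem_ofPred_eq, Prod.smul_fst, Prod.smul_snd, smul_eq_mul]
  constructor <;> intro h <;> linear_combination h

def circleSide (σ : ℤˣ) : Set (ℝ × ℝ) := {p | 0 < σ • (p.1 ^ 2 + p.2 ^ 2 - 1/2)}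

theorem isOpen_circleSide (σ : ℤˣ) : IsOpen (circleSide σ) :=
  isOpen_lt continuous_const (by fun_prop)

theorem pairwise_disjoint_circleSide : Pairwise (Disjoint on circleSide) :=
  fun _ _ hne => Set.disjoint_left.mpr fun p hp hp' =>
    hne (Int.units_eq_of_smul_pos (x := p.1 ^ 2 + p.2 ^ 2 - 1/2) hp hp')

theorem quarticCurve_subset_iUnion_circleSide (hα : α < 1/4) :
    quarticCurve α ⊆ ⋃ σ, circleSide σ := by
  intro p hp
  simp only [quarticCurve, mem_ofPred_eq] at hp
  have hne : p.1 ^ 2 + p.2 ^ 2 - 1/2 ≠ 0 := fun h => by nlinarith [sq_nonneg (p.1 * p.2)]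
  obtain ⟨σ, hσ⟩ := Int.exists_units_smul_pos hne
  exact mem_iUnion.mpr ⟨σ, hσ⟩

def radialProj (α : ℝ) (σ : ℤˣ) (p : ℝ × ℝ) : ℝ × ℝ :=
  √(quadRoot α (p.1 ^ 2 + p.2 ^ 2) (p.1 ^ 4 + p.2 ^ 4) σ) • p

theorem continuousOn_radialProj (σ : ℤˣ) : ContinuousOn (radialProj α σ) {0}ᶜ := by
  unfold radialProj quadRoot
  refine ((ContinuousOn.div (by fun_prop) (by fun_prop) fun p hp => ?_).sqrt).smul continuousOn_id
  have := pow_four_add_pow_four_pos hp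
  positivity

theorem quarticCurve_inter_circleSide (h₀ : 0 < α) (h : α < 1/4) (σ : ℤˣ) :
    quarticCurve α ∩ circleSide σ = radialProj α σ '' {0}ᶜ := by
  ext p
  constructor
  · rintro ⟨hp : _ = 0, hσ⟩
    have hp₀ : p ≠ 0 := by rintro rfl; simp at hp; linarith
    refine ⟨p, hp₀, ?_⟩
    rw [radialProj, quadRoot_eq_one h (pow_four_add_pow_four_pos hp₀)
      (pow_four_add_pow_four_le p.1 p.2) (by positivity) (by linear_combination hp) hσ,
      Real.sqrt_one, one_smul]
  · rintro ⟨p, hp₀, rfl⟩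
    have hQ := pow_four_add_pow_four_pos hp₀
    have hQN := pow_four_add_pow_four_le p.1 p.2
    have hN : 0 ≤ p.1 ^ 2 + p.2 ^ 2 := by positivity
    have hc := Real.sq_sqrt (quadRoot_nonneg h₀ hQ hN σ)
    refine ⟨(smul_mem_quarticCurve_iff _ p).mpr ?_, ?_⟩
    · rw [hc]
      exact quadRoot_isRoot hQ.ne' (by nlinarith) σ
    · have hside := units_smul_quadRoot_mul_sub_half_pos h₀ h hQ hQN hN σ
      simp only [circleSide, radialProj, mem_ofPred_eq, Prod.smul_fst, Prod.smul_snd,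
        smul_eq_mul, mul_pow, hc]
      convert hside using 2
      ring

theorem card_connectedComponents_quarticCurve_of_lt_quarter (h₀ : 0 < α) (h : α < 1/4) :
    Nat.card (ConnectedComponents (quarticCurve α)) = 2 := by
  have hpunctured : IsConnected ({0}ᶜ : Set (ℝ × ℝ)) :=
    isConnected_compl_singleton_of_one_lt_rank (by simp; norm_num) 0
  refine (Nat.card_connectedComponents_eq_of_isOpen_cover circleSide isOpen_circleSide
    pairwise_disjoint_circleSide (quarticCurve_subset_iUnion_circleSide h) fun σ => ?_).trans
    (by simp)
  rw [quarticCurve_inter_circleSide h₀ h]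
  exact hpunctured.image _ (continuousOn_radialProj σ)

end TwoOvals

/-- For `α ∈ (1/4, 1/2)` the real plane curve `x⁴ + y⁴ − x² − y² + α = 0` has exactly
four connected components, and for `α ∈ (0, 1/4)` it has exactly two. -/
theorem components_of_quartic_curves :
    (∀ α : ℝ, α ∈ Ioo (1/4 : ℝ) (1/2 : ℝ) →
      Nat.card (ConnectedComponents
        ↥{v : ℝ × ℝ | v.1 ^ 4 + v.2 ^ 4 - v.1 ^ 2 - v.2 ^ 2 + α = 0}) = 4) ∧
    (∀ α : ℝ, α ∈ Ioo (0 : ℝ) (1/4 : ℝ) →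
      Nat.card (ConnectedComponents
        ↥{v : ℝ × ℝ | v.1 ^ 4 + v.2 ^ 4 - v.1 ^ 2 - v.2 ^ 2 + α = 0}) = 2) :=
  ⟨fun _ hα => card_connectedComponents_quarticCurve_of_quarter_lt hα.1 hα.2.le,
    fun _ hα => card_connectedComponents_quarticCurve_of_lt_quarter hα.1 hα.2⟩
end
end
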